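/- arXiv:1809.08736 — 4 statements merged into one kernel-verified Lean document; each statement's English description precedes it below -/
import Mathlib

section
/- Let u, v : ℝ × ℝ → ℝ be smooth (C^∞) functions of (t, x) and let a, b, c, ε, κ, λ, σ be real constants with b = 0. If (u, v) solves the BBM-KdV system, then the vector with components C^t = u + ε·u_xx and C^x = (a·u + c)·v + κ·v_xx satisfies the conservation law ∂_t C^t + ∂_x C^x = 0 at every point (t, x). -/
open Real

noncomputable def pt (f : ℝ × ℝ → ℝ) : ℝ × ℝ → ℝ :=
  fun p => deriv (fun s => f (s, p.2)) p.1

noncomputable def px (f : ℝ × ℝ → ℝ) : ℝ × ℝ → ℝ :=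
  fun p => deriv (fun s => f (p.1, s)) p.2

/-- The BBM-KdV system: F1 = 0 and F2 = 0 everywhere. -/
def BBMKdV (a b c ε κ lam σ : ℝ) (u v : ℝ × ℝ → ℝ) : Prop :=
  (∀ p : ℝ × ℝ, pt u p + (a + b) * v p * px u p + (a * u p + c) * px v p
      + ε * px (px (pt u)) p + κ * px (px (px v)) p = 0) ∧
  (∀ p : ℝ × ℝ, pt v p + (b * u p + c) * px u p + (a + b) * v p * px v p
      + lam * px (px (px u)) p + σ * px (px (pt v)) p = 0)

section aux

variable {f g : ℝ × ℝ → ℝ}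

lemma hasDerivAt_slice_t (hf : DifferentiableAt ℝ f p) :
    HasDerivAt (fun s => f (s, p.2)) (fderiv ℝ f p (1, 0)) p.1 := by
  have h1 : HasDerivAt (fun s : ℝ => (s, p.2)) ((1 : ℝ), (0 : ℝ)) p.1 :=
    (hasDerivAt_id p.1).prodMk (hasDerivAt_const _ _)
  have := hf.hasFDerivAt.comp_hasDerivAt p.1 (by simpa using h1)
  exact this

lemma hasDerivAt_slice_x (hf : DifferentiableAt ℝ f p) :
    HasDerivAt (fun s => f (p.1, s)) (fderiv ℝ f p (0, 1)) p.2 := by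
  have h1 : HasDerivAt (fun s : ℝ => (p.1, s)) ((0 : ℝ), (1 : ℝ)) p.2 :=
    (hasDerivAt_const _ _).prodMk (hasDerivAt_id p.2)
  have := hf.hasFDerivAt.comp_hasDerivAt p.2 (by simpa using h1)
  exact this

lemma pt_eq (hf : DifferentiableAt ℝ f p) : pt f p = fderiv ℝ f p (1, 0) :=
  (hasDerivAt_slice_t hf).deriv

lemma px_eq (hf : DifferentiableAt ℝ f p) : px f p = fderiv ℝ f p (0, 1) :=
  (hasDerivAt_slice_x hf).deriv

lemma contDiff_px (hf : ContDiff ℝ (⊤ : ℕ∞) f) : ContDiff ℝ (⊤ : ℕ∞) (px f) := by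
  have : px f = fun p => fderiv ℝ f p (0, 1) := by
    funext p; exact px_eq (hf.differentiable (by simp)).differentiableAt
  rw [this]
  exact (hf.fderiv_right (le_refl _)).clm_apply contDiff_const

lemma pt_px_comm (hf : ContDiff ℝ (⊤ : ℕ∞) f) : pt (px f) = px (pt f) := by
  funext p
  have hdf : ContDiff ℝ (⊤ : ℕ∞) (fderiv ℝ f) := hf.fderiv_right (le_refl _)
  have hfd : Differentiable ℝ f := hf.differentiable (by simp)
  have hpx : px f = fun q => fderiv ℝ f q (0, 1) := by
    funext q; exact px_eq (hfd q)
  have hpt : pt f = fun q => fderiv ℝ f q (1, 0) := by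
    funext q; exact pt_eq (hfd q)
  have hsym : IsSymmSndFDerivAt ℝ f p := hf.contDiffAt.isSymmSndFDerivAt (by
    rw [minSmoothness_of_isRCLikeNormedField]; exact WithTop.coe_le_coe.mpr le_top)
  have h1 : pt (px f) p = fderiv ℝ (fderiv ℝ f) p (1, 0) (0, 1) := by
    rw [pt_eq (by rw [hpx]; exact ((hdf.clm_apply contDiff_const).differentiable (by simp)).differentiableAt)]
    rw [hpx]
    rw [fderiv_clm_apply ((hdf.differentiable (by simp)).differentiableAt) (differentiableAt_const _)]
    simp
  have h2 : px (pt f) p = fderiv ℝ (fderiv ℝ f) p (0, 1) (1, 0) := by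
    rw [px_eq (by rw [hpt]; exact ((hdf.clm_apply contDiff_const).differentiable (by simp)).differentiableAt)]
    rw [hpt]
    rw [fderiv_clm_apply ((hdf.differentiable (by simp)).differentiableAt) (differentiableAt_const _)]
    simp
  rw [h1, h2, hsym]

lemma pt_add (hf : DifferentiableAt ℝ f p) (hg : DifferentiableAt ℝ g p) :
    pt (fun q => f q + g q) p = pt f p + pt g p := by
  unfold pt
  exact deriv_add (hasDerivAt_slice_t hf).differentiableAt
    (hasDerivAt_slice_t hg).differentiableAt

lemma px_add (hf : DifferentiableAt ℝ f p) (hg : DifferentiableAt ℝ g p) :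
    px (fun q => f q + g q) p = px f p + px g p := by
  unfold px
  exact deriv_add (hasDerivAt_slice_x hf).differentiableAt
    (hasDerivAt_slice_x hg).differentiableAt

lemma pt_const_mul (c : ℝ) (hf : DifferentiableAt ℝ f p) :
    pt (fun q => c * f q) p = c * pt f p := by
  unfold pt
  exact deriv_const_mul c (hasDerivAt_slice_t hf).differentiableAt

lemma px_const_mul (c : ℝ) (hf : DifferentiableAt ℝ f p) :
    px (fun q => c * f q) p = c * px f p := by
  unfold px
  exact deriv_const_mul c (hasDerivAt_slice_x hf).differentiableAt

lemma px_mul (hf : DifferentiableAt ℝ f p) (hg : DifferentiableAt ℝ g p) :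
    px (fun q => f q * g q) p = px f p * g p + f p * px g p := by
  unfold px
  have := deriv_fun_mul (hasDerivAt_slice_x hf).differentiableAt
    (hasDerivAt_slice_x hg).differentiableAt
  simpa using this

lemma px_add_const (c : ℝ) (_hf : DifferentiableAt ℝ f p) :
    px (fun q => f q + c) p = px f p := by
  unfold px
  simp only []; exact deriv_add_const (f := fun s => f (p.1, s)) (x := p.2) c

end aux

theorem stmt_0 (u v : ℝ × ℝ → ℝ) (hu : ContDiff ℝ (⊤ : ℕ∞) u) (hv : ContDiff ℝ (⊤ : ℕ∞) v)
    (a b c ε κ lam σ : ℝ)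
    (hb : b = 0)
    (hsol : BBMKdV a b c ε κ lam σ u v) :
    ∀ p : ℝ × ℝ,
      pt (fun q => u q + ε * px (px u) q) p
      + px (fun q => (a * u q + c) * v q + κ * px (px v) q) p = 0 := by
  intro p
  have huxx : ContDiff ℝ (⊤ : ℕ∞) (px (px u)) := contDiff_px (contDiff_px hu)
  have hvxx : ContDiff ℝ (⊤ : ℕ∞) (px (px v)) := contDiff_px (contDiff_px hv)
  have hD : ∀ {f : ℝ × ℝ → ℝ}, ContDiff ℝ (⊤ : ℕ∞) f → DifferentiableAt ℝ f p :=
    fun hf => (hf.differentiable (by simp)).differentiableAt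
  have hau : ContDiff ℝ (⊤ : ℕ∞) (fun q => a * u q) := contDiff_const.mul hu
  have hauc : ContDiff ℝ (⊤ : ℕ∞) (fun q => a * u q + c) := hau.add contDiff_const
  -- expand the pt term
  have h1 : pt (fun q => u q + ε * px (px u) q) p
      = pt u p + ε * pt (px (px u)) p := by
    rw [pt_add (hD hu) (hD (contDiff_const.mul huxx)), pt_const_mul ε (hD huxx)]
  -- commute derivatives
  have hcomm : pt (px (px u)) = px (px (pt u)) := by
    rw [pt_px_comm (contDiff_px hu), pt_px_comm hu]
  -- expand the px term
  have h2 : px (fun q => (a * u q + c) * v q + κ * px (px v) q) p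
      = (a * px u p) * v p + (a * u p + c) * px v p + κ * px (px (px v)) p := by
    rw [px_add (hD (hauc.mul hv)) (hD (contDiff_const.mul hvxx)),
      px_const_mul κ (hD hvxx),
      px_mul (hD hauc) (hD hv),
      px_add_const c (hD hau),
      px_const_mul a (hD hu)]
  have hF1 := hsol.1 p
  rw [hb] at hF1
  rw [h1, hcomm, h2]
  linarith
end

section
/- Let u, v : ℝ × ℝ → ℝ be smooth (C^∞) functions of (t, x), let a, b, c, ε, κ, λ, σ be real constants with b = 0, and suppose a·u(t,x) + c > 0 for all (t, x). Let c1, c2, c3, c4, c5 be real constants such that: if ε and σ are not both zero then c1 = 0; if ε ≠ σ then c2 = 0; and if ε, κ, λ are not all zero then c3 = 0. Define ū(t,x) = (c1·t + c2)·a·v(t,x) + c3·c·ln(a·u(t,x) + c) − c1·x + c4 and v̄(t,x) = c3·a·v(t,x) + (c1·t + c2)·(a·u(t,x) + c) + c5. If (u, v) solves the BBM-KdV system, then (ū, v̄) solves the adjoint system at every point (t, x). -/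
open Real

/-- The adjoint of the BBM-KdV system along (u, v): F1* = 0 and F2* = 0 everywhere. -/
def AdjBBMKdV (a b c ε κ lam σ : ℝ) (u v ub vb : ℝ × ℝ → ℝ) : Prop :=
  (∀ p : ℝ × ℝ, pt ub p + (a + b) * v p * px ub p + (b * u p + c) * px vb p
      + b * ub p * px v p + ε * px (px (pt ub)) p + lam * px (px (px vb)) p = 0) ∧
  (∀ p : ℝ × ℝ, pt vb p + (a * u p + c) * px ub p + (a + b) * v p * px vb p
      - b * ub p * px u p + κ * px (px (px ub)) p + σ * px (px (pt vb)) p = 0)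

/-! ### Auxiliary partial-derivative framework -/

noncomputable def Dt (f : ℝ × ℝ → ℝ) : ℝ × ℝ → ℝ := fun p => fderiv ℝ f p (1, 0)
noncomputable def Dx (f : ℝ × ℝ → ℝ) : ℝ × ℝ → ℝ := fun p => fderiv ℝ f p (0, 1)

lemma pt_eq_s7 {f : ℝ × ℝ → ℝ} (hf : Differentiable ℝ f) : pt f = Dt f := by
  funext p
  have h1 : HasDerivAt (fun s : ℝ => (s, p.2)) ((1:ℝ), (0:ℝ)) p.1 :=
    (hasDerivAt_id p.1).prodMk (hasDerivAt_const _ _)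
  have h : HasDerivAt (fun s => f (s, p.2)) (fderiv ℝ f p (1, 0)) p.1 :=
    ((hf p).hasFDerivAt.comp_hasDerivAt p.1 h1)
  simpa [pt, Dt] using h.deriv

lemma px_eq_s7 {f : ℝ × ℝ → ℝ} (hf : Differentiable ℝ f) : px f = Dx f := by
  funext p
  have h1 : HasDerivAt (fun s : ℝ => (p.1, s)) ((0:ℝ), (1:ℝ)) p.2 :=
    (hasDerivAt_const _ _).prodMk (hasDerivAt_id p.2)
  have h : HasDerivAt (fun s => f (p.1, s)) (fderiv ℝ f p (0, 1)) p.2 :=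
    ((hf p).hasFDerivAt.comp_hasDerivAt p.2 h1)
  simpa [px, Dx] using h.deriv

lemma contDiff_Dt {f : ℝ × ℝ → ℝ} (hf : ContDiff ℝ (⊤ : ℕ∞) f) : ContDiff ℝ (⊤ : ℕ∞) (Dt f) :=
  (hf.fderiv_right ((by simp))).clm_apply contDiff_const

lemma contDiff_Dx {f : ℝ × ℝ → ℝ} (hf : ContDiff ℝ (⊤ : ℕ∞) f) : ContDiff ℝ (⊤ : ℕ∞) (Dx f) :=
  (hf.fderiv_right ((by simp))).clm_apply contDiff_const

section rules
variable {f g : ℝ × ℝ → ℝ} {p : ℝ × ℝ}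

lemma Dt_add (hf : DifferentiableAt ℝ f p) (hg : DifferentiableAt ℝ g p) :
    Dt (fun q => f q + g q) p = Dt f p + Dt g p := by
  simp [Dt, fderiv_fun_add hf hg]

lemma Dx_add (hf : DifferentiableAt ℝ f p) (hg : DifferentiableAt ℝ g p) :
    Dx (fun q => f q + g q) p = Dx f p + Dx g p := by
  simp [Dx, fderiv_fun_add hf hg]

lemma Dt_sub (hf : DifferentiableAt ℝ f p) (hg : DifferentiableAt ℝ g p) :
    Dt (fun q => f q - g q) p = Dt f p - Dt g p := by
  simp [Dt, fderiv_fun_sub hf hg]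

lemma Dx_sub (hf : DifferentiableAt ℝ f p) (hg : DifferentiableAt ℝ g p) :
    Dx (fun q => f q - g q) p = Dx f p - Dx g p := by
  simp [Dx, fderiv_fun_sub hf hg]

lemma Dt_mul (hf : DifferentiableAt ℝ f p) (hg : DifferentiableAt ℝ g p) :
    Dt (fun q => f q * g q) p = Dt f p * g p + f p * Dt g p := by
  simp [Dt, fderiv_fun_mul hf hg]; ring

lemma Dx_mul (hf : DifferentiableAt ℝ f p) (hg : DifferentiableAt ℝ g p) :
    Dx (fun q => f q * g q) p = Dx f p * g p + f p * Dx g p := by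
  simp [Dx, fderiv_fun_mul hf hg]; ring

lemma Dt_const (k : ℝ) : Dt (fun _ => k) p = 0 := by simp [Dt]
lemma Dx_const (k : ℝ) : Dx (fun _ => k) p = 0 := by simp [Dx]

lemma Dt_fst : Dt (fun q : ℝ × ℝ => q.1) p = 1 := by
  simp [Dt, (hasFDerivAt_fst (𝕜 := ℝ) (p := p)).fderiv]
lemma Dx_fst : Dx (fun q : ℝ × ℝ => q.1) p = 0 := by
  simp [Dx, (hasFDerivAt_fst (𝕜 := ℝ) (p := p)).fderiv]
lemma Dt_snd : Dt (fun q : ℝ × ℝ => q.2) p = 0 := by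
  simp [Dt, (hasFDerivAt_snd (𝕜 := ℝ) (p := p)).fderiv]
lemma Dx_snd : Dx (fun q : ℝ × ℝ => q.2) p = 1 := by
  simp [Dx, (hasFDerivAt_snd (𝕜 := ℝ) (p := p)).fderiv]

lemma Dt_log (hf : DifferentiableAt ℝ f p) (h0 : f p ≠ 0) :
    Dt (fun q => Real.log (f q)) p = Dt f p / f p := by
  have h := (Real.hasDerivAt_log h0).comp_hasFDerivAt p hf.hasFDerivAt
  have h' : HasFDerivAt (fun q => Real.log (f q)) ((f p)⁻¹ • fderiv ℝ f p) p := h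
  simp [Dt, h'.fderiv, div_eq_inv_mul]

lemma Dx_log (hf : DifferentiableAt ℝ f p) (h0 : f p ≠ 0) :
    Dx (fun q => Real.log (f q)) p = Dx f p / f p := by
  have h := (Real.hasDerivAt_log h0).comp_hasFDerivAt p hf.hasFDerivAt
  have h' : HasFDerivAt (fun q => Real.log (f q)) ((f p)⁻¹ • fderiv ℝ f p) p := h
  simp [Dx, h'.fderiv, div_eq_inv_mul]

end rules


theorem stmt_7 (u v : ℝ × ℝ → ℝ) (hu : ContDiff ℝ (⊤ : ℕ∞) u) (hv : ContDiff ℝ (⊤ : ℕ∞) v)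
    (a b c ε κ lam σ : ℝ)
    (hb : b = 0) (hpos : ∀ p : ℝ × ℝ, a * u p + c > 0)
    (c1 c2 c3 c4 c5 : ℝ)
    (h1 : ¬(ε = 0 ∧ σ = 0) → c1 = 0)
    (h2 : ε ≠ σ → c2 = 0)
    (h3 : ¬(ε = 0 ∧ κ = 0 ∧ lam = 0) → c3 = 0)
    (hsol : BBMKdV a b c ε κ lam σ u v) :
    AdjBBMKdV a b c ε κ lam σ u v
      (fun p => (c1 * p.1 + c2) * a * v p + c3 * c * Real.log (a * u p + c) - c1 * p.2 + c4)
      (fun p => c3 * a * v p + (c1 * p.1 + c2) * (a * u p + c) + c5) := by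
  subst hb
  -- scalar facts
  have hc1e : c1 * ε = 0 := by
    rcases em (ε = 0 ∧ σ = 0) with ⟨he, hs⟩ | h
    · simp [he]
    · simp [h1 h]
  have hc1s : c1 * σ = 0 := by
    rcases em (ε = 0 ∧ σ = 0) with ⟨he, hs⟩ | h
    · simp [hs]
    · simp [h1 h]
  have hc2' : c2 * ε = c2 * σ := by
    rcases em (ε = σ) with h | h
    · rw [h]
    · simp [h2 h]
  have hc3e : c3 * ε = 0 := by
    rcases em (ε = 0 ∧ κ = 0 ∧ lam = 0) with ⟨he, _, _⟩ | h
    · simp [he]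
    · simp [h3 h]
  have hc3k : c3 * κ = 0 := by
    rcases em (ε = 0 ∧ κ = 0 ∧ lam = 0) with ⟨_, hk, _⟩ | h
    · simp [hk]
    · simp [h3 h]
  have hc3l : c3 * lam = 0 := by
    rcases em (ε = 0 ∧ κ = 0 ∧ lam = 0) with ⟨_, _, hl⟩ | h
    · simp [hl]
    · simp [h3 h]
  have hAne : ∀ q : ℝ × ℝ, a * u q + c ≠ 0 := fun q => ne_of_gt (hpos q)
  -- smoothness facts
  have hud : Differentiable ℝ u := hu.differentiable (by simp)
  have hvd : Differentiable ℝ v := hv.differentiable (by simp)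
  have hDtuc : ContDiff ℝ (⊤ : ℕ∞) (Dt u) := contDiff_Dt hu
  have hDxuc : ContDiff ℝ (⊤ : ℕ∞) (Dx u) := contDiff_Dx hu
  have hDtvc : ContDiff ℝ (⊤ : ℕ∞) (Dt v) := contDiff_Dt hv
  have hDxvc : ContDiff ℝ (⊤ : ℕ∞) (Dx v) := contDiff_Dx hv
  have hDtu : Differentiable ℝ (Dt u) := hDtuc.differentiable (by simp)
  have hDxu : Differentiable ℝ (Dx u) := hDxuc.differentiable (by simp)
  have hDtv : Differentiable ℝ (Dt v) := hDtvc.differentiable (by simp)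
  have hDxv : Differentiable ℝ (Dx v) := hDxvc.differentiable (by simp)
  have hDxDtu : Differentiable ℝ (Dx (Dt u)) := (contDiff_Dx hDtuc).differentiable (by simp)
  have hDxDxu : Differentiable ℝ (Dx (Dx u)) := (contDiff_Dx hDxuc).differentiable (by simp)
  have hDxDtv : Differentiable ℝ (Dx (Dt v)) := (contDiff_Dx hDtvc).differentiable (by simp)
  have hDxDxv : Differentiable ℝ (Dx (Dx v)) := (contDiff_Dx hDxvc).differentiable (by simp)
  have hAc : ContDiff ℝ (⊤ : ℕ∞) (fun q : ℝ × ℝ => a * u q + c) :=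
    (contDiff_const.mul hu).add contDiff_const
  have hLc : ContDiff ℝ (⊤ : ℕ∞) (fun q : ℝ × ℝ => Real.log (a * u q + c)) := hAc.log hAne
  have hDtLc : ContDiff ℝ (⊤ : ℕ∞) (Dt (fun q : ℝ × ℝ => Real.log (a * u q + c))) := contDiff_Dt hLc
  have hDxLc : ContDiff ℝ (⊤ : ℕ∞) (Dx (fun q : ℝ × ℝ => Real.log (a * u q + c))) := contDiff_Dx hLc
  have hDtL : Differentiable ℝ (Dt (fun q : ℝ × ℝ => Real.log (a * u q + c))) :=
    hDtLc.differentiable (by simp)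
  have hDxL : Differentiable ℝ (Dx (fun q : ℝ × ℝ => Real.log (a * u q + c))) :=
    hDxLc.differentiable (by simp)
  have hDxDtL : Differentiable ℝ (Dx (Dt (fun q : ℝ × ℝ => Real.log (a * u q + c)))) :=
    (contDiff_Dx hDtLc).differentiable (by simp)
  have hDxDxL : Differentiable ℝ (Dx (Dx (fun q : ℝ × ℝ => Real.log (a * u q + c)))) :=
    (contDiff_Dx hDxLc).differentiable (by simp)
  have hphic : ContDiff ℝ (⊤ : ℕ∞) (fun q : ℝ × ℝ => (c1 * q.1 + c2) * a) :=
    ((contDiff_const.mul contDiff_fst).add contDiff_const).mul contDiff_const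
  -- the adjoint candidate functions
  set ub : ℝ × ℝ → ℝ :=
    fun p => (c1 * p.1 + c2) * a * v p + c3 * c * Real.log (a * u p + c) - c1 * p.2 + c4
    with hubdef
  set vb : ℝ × ℝ → ℝ :=
    fun p => c3 * a * v p + (c1 * p.1 + c2) * (a * u p + c) + c5 with hvbdef
  have hubc : ContDiff ℝ (⊤ : ℕ∞) ub := by
    rw [hubdef]
    exact (((hphic.mul hv).add (contDiff_const.mul hLc)).sub
      (contDiff_const.mul contDiff_snd)).add contDiff_const
  have hvbc : ContDiff ℝ (⊤ : ℕ∞) vb := by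
    rw [hvbdef]
    exact (((contDiff_const.mul hv).add
      (((contDiff_const.mul contDiff_fst).add contDiff_const).mul hAc)).add contDiff_const)
  have hubd : Differentiable ℝ ub := hubc.differentiable (by simp)
  have hvbd : Differentiable ℝ vb := hvbc.differentiable (by simp)
  have hDtubc : ContDiff ℝ (⊤ : ℕ∞) (Dt ub) := contDiff_Dt hubc
  have hDxubc : ContDiff ℝ (⊤ : ℕ∞) (Dx ub) := contDiff_Dx hubc
  have hDtvbc : ContDiff ℝ (⊤ : ℕ∞) (Dt vb) := contDiff_Dt hvbc
  have hDxvbc : ContDiff ℝ (⊤ : ℕ∞) (Dx vb) := contDiff_Dx hvbc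
  have hDtub : Differentiable ℝ (Dt ub) := hDtubc.differentiable (by simp)
  have hDxub : Differentiable ℝ (Dx ub) := hDxubc.differentiable (by simp)
  have hDtvb : Differentiable ℝ (Dt vb) := hDtvbc.differentiable (by simp)
  have hDxvb : Differentiable ℝ (Dx vb) := hDxvbc.differentiable (by simp)
  have hDxDtub : Differentiable ℝ (Dx (Dt ub)) := (contDiff_Dx hDtubc).differentiable (by simp)
  have hDxDxub : Differentiable ℝ (Dx (Dx ub)) := (contDiff_Dx hDxubc).differentiable (by simp)
  have hDxDtvb : Differentiable ℝ (Dx (Dt vb)) := (contDiff_Dx hDtvbc).differentiable (by simp)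
  have hDxDxvb : Differentiable ℝ (Dx (Dx vb)) := (contDiff_Dx hDxvbc).differentiable (by simp)
  -- convert hypotheses to Dt/Dx form
  obtain ⟨E1, E2⟩ := hsol
  simp only [pt_eq_s7 hud, px_eq_s7 hud, pt_eq_s7 hvd, px_eq_s7 hvd, px_eq_s7 hDtu, px_eq_s7 hDxu,
    px_eq_s7 hDtv, px_eq_s7 hDxv, px_eq_s7 hDxDtu, px_eq_s7 hDxDxu, px_eq_s7 hDxDtv, px_eq_s7 hDxDxv,
    add_zero, zero_mul, zero_add, mul_zero] at E1 E2
  -- derivative computations for ub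
  have T1 : Dt ub = fun q => c1 * a * v q + (c1 * q.1 + c2) * a * Dt v q
      + c3 * c * Dt (fun r : ℝ × ℝ => Real.log (a * u r + c)) q := by
    rw [hubdef]; funext q
    simp (disch := first
        | exact hAne _
        | fun_prop (disch := exact hAne _)) only
      [Dt_add, Dt_sub, Dt_mul, Dt_const, Dt_fst, Dt_snd,
       add_zero, zero_add, mul_zero, zero_mul, mul_one, one_mul, sub_zero]
    try ring
  have T1x : Dx (Dt ub) = fun q => c1 * a * Dx v q + (c1 * q.1 + c2) * a * Dx (Dt v) q
      + c3 * c * Dx (Dt (fun r : ℝ × ℝ => Real.log (a * u r + c))) q := by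
    rw [T1]; funext q
    simp (disch := first
        | exact hAne _
        | fun_prop (disch := exact hAne _)) only
      [Dx_add, Dx_sub, Dx_mul, Dx_const, Dx_fst, Dx_snd,
       add_zero, zero_add, mul_zero, zero_mul, mul_one, one_mul, sub_zero]
    try ring
  have T1xx : Dx (Dx (Dt ub)) = fun q => c1 * a * Dx (Dx v) q
      + (c1 * q.1 + c2) * a * Dx (Dx (Dt v)) q
      + c3 * c * Dx (Dx (Dt (fun r : ℝ × ℝ => Real.log (a * u r + c)))) q := by
    rw [T1x]; funext q
    simp (disch := first
        | exact hAne _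
        | fun_prop (disch := exact hAne _)) only
      [Dx_add, Dx_sub, Dx_mul, Dx_const, Dx_fst, Dx_snd,
       add_zero, zero_add, mul_zero, zero_mul, mul_one, one_mul, sub_zero]
    try ring
  have X1 : Dx ub = fun q => (c1 * q.1 + c2) * a * Dx v q
      + c3 * c * Dx (fun r : ℝ × ℝ => Real.log (a * u r + c)) q - c1 := by
    rw [hubdef]; funext q
    simp (disch := first
        | exact hAne _
        | fun_prop (disch := exact hAne _)) only
      [Dx_add, Dx_sub, Dx_mul, Dx_const, Dx_fst, Dx_snd,
       add_zero, zero_add, mul_zero, zero_mul, mul_one, one_mul, sub_zero]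
    try ring
  have X2 : Dx (Dx ub) = fun q => (c1 * q.1 + c2) * a * Dx (Dx v) q
      + c3 * c * Dx (Dx (fun r : ℝ × ℝ => Real.log (a * u r + c))) q := by
    rw [X1]; funext q
    simp (disch := first
        | exact hAne _
        | fun_prop (disch := exact hAne _)) only
      [Dx_add, Dx_sub, Dx_mul, Dx_const, Dx_fst, Dx_snd,
       add_zero, zero_add, mul_zero, zero_mul, mul_one, one_mul, sub_zero]
    try ring
  have X3 : Dx (Dx (Dx ub)) = fun q => (c1 * q.1 + c2) * a * Dx (Dx (Dx v)) q
      + c3 * c * Dx (Dx (Dx (fun r : ℝ × ℝ => Real.log (a * u r + c)))) q := by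
    rw [X2]; funext q
    simp (disch := first
        | exact hAne _
        | fun_prop (disch := exact hAne _)) only
      [Dx_add, Dx_sub, Dx_mul, Dx_const, Dx_fst, Dx_snd,
       add_zero, zero_add, mul_zero, zero_mul, mul_one, one_mul, sub_zero]
    try ring
  -- derivative computations for vb
  have S1 : Dt vb = fun q => c3 * a * Dt v q + c1 * (a * u q + c)
      + (c1 * q.1 + c2) * (a * Dt u q) := by
    rw [hvbdef]; funext q
    simp (disch := first
        | exact hAne _
        | fun_prop (disch := exact hAne _)) only
      [Dt_add, Dt_sub, Dt_mul, Dt_const, Dt_fst, Dt_snd,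
       add_zero, zero_add, mul_zero, zero_mul, mul_one, one_mul, sub_zero]
    try ring
  have S1x : Dx (Dt vb) = fun q => c3 * a * Dx (Dt v) q + c1 * (a * Dx u q)
      + (c1 * q.1 + c2) * (a * Dx (Dt u) q) := by
    rw [S1]; funext q
    simp (disch := first
        | exact hAne _
        | fun_prop (disch := exact hAne _)) only
      [Dx_add, Dx_sub, Dx_mul, Dx_const, Dx_fst, Dx_snd,
       add_zero, zero_add, mul_zero, zero_mul, mul_one, one_mul, sub_zero]
    try ring
  have S1xx : Dx (Dx (Dt vb)) = fun q => c3 * a * Dx (Dx (Dt v)) q + c1 * (a * Dx (Dx u) q)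
      + (c1 * q.1 + c2) * (a * Dx (Dx (Dt u)) q) := by
    rw [S1x]; funext q
    simp (disch := first
        | exact hAne _
        | fun_prop (disch := exact hAne _)) only
      [Dx_add, Dx_sub, Dx_mul, Dx_const, Dx_fst, Dx_snd,
       add_zero, zero_add, mul_zero, zero_mul, mul_one, one_mul, sub_zero]
    try ring
  have Y1 : Dx vb = fun q => c3 * a * Dx v q + (c1 * q.1 + c2) * (a * Dx u q) := by
    rw [hvbdef]; funext q
    simp (disch := first
        | exact hAne _
        | fun_prop (disch := exact hAne _)) only
      [Dx_add, Dx_sub, Dx_mul, Dx_const, Dx_fst, Dx_snd,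
       add_zero, zero_add, mul_zero, zero_mul, mul_one, one_mul, sub_zero]
    try ring
  have Y2 : Dx (Dx vb) = fun q => c3 * a * Dx (Dx v) q
      + (c1 * q.1 + c2) * (a * Dx (Dx u) q) := by
    rw [Y1]; funext q
    simp (disch := first
        | exact hAne _
        | fun_prop (disch := exact hAne _)) only
      [Dx_add, Dx_sub, Dx_mul, Dx_const, Dx_fst, Dx_snd,
       add_zero, zero_add, mul_zero, zero_mul, mul_one, one_mul, sub_zero]
    try ring
  have Y3 : Dx (Dx (Dx vb)) = fun q => c3 * a * Dx (Dx (Dx v)) q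
      + (c1 * q.1 + c2) * (a * Dx (Dx (Dx u)) q) := by
    rw [Y2]; funext q
    simp (disch := first
        | exact hAne _
        | fun_prop (disch := exact hAne _)) only
      [Dx_add, Dx_sub, Dx_mul, Dx_const, Dx_fst, Dx_snd,
       add_zero, zero_add, mul_zero, zero_mul, mul_one, one_mul, sub_zero]
    try ring
  refine ⟨fun p => ?_, fun p => ?_⟩
  · -- first adjoint equation
    simp only [pt_eq_s7 hubd, px_eq_s7 hubd, pt_eq_s7 hvbd, px_eq_s7 hvbd, px_eq_s7 hDtub, px_eq_s7 hDxub,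
      px_eq_s7 hDxDtub, px_eq_s7 hDxDxub, px_eq_s7 hDtvb, px_eq_s7 hDxvb, px_eq_s7 hDxDtvb, px_eq_s7 hDxDxvb,
      px_eq_s7 hvd,
      add_zero, zero_mul, zero_add, mul_zero]
    rw [T1xx, Y3, X1, Y1, T1]
    beta_reduce
    have hDtLp : Dt (fun r : ℝ × ℝ => Real.log (a * u r + c)) p
        = a * Dt u p / (a * u p + c) := by
      rw [Dt_log (by fun_prop) (hAne p)]
      have : Dt (fun r : ℝ × ℝ => a * u r + c) p = a * Dt u p := by
        simp (disch := fun_prop) only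
          [Dt_add, Dt_mul, Dt_const, add_zero, zero_add, mul_zero, zero_mul]
      rw [this]
    have hDxLp : Dx (fun r : ℝ × ℝ => Real.log (a * u r + c)) p
        = a * Dx u p / (a * u p + c) := by
      rw [Dx_log (by fun_prop) (hAne p)]
      have : Dx (fun r : ℝ × ℝ => a * u r + c) p = a * Dx u p := by
        simp (disch := fun_prop) only
          [Dx_add, Dx_mul, Dx_const, add_zero, zero_add, mul_zero, zero_mul]
      rw [this]
    rw [hDtLp, hDxLp]
    have hA0 : a * u p + c ≠ 0 := hAne p
    field_simp
    linear_combination ((a * u p + c) * (c1 * p.1 + c2) * a) * E2 p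
      + (c3 * c * a) * E1 p
      + ((a * u p + c) * a * Dx (Dx v) p
          + (a * u p + c) * a * Dx (Dx (Dt v)) p * p.1) * hc1e
      - ((a * u p + c) * a * Dx (Dx (Dt v)) p * p.1) * hc1s
      + ((a * u p + c) * a * Dx (Dx (Dt v)) p) * hc2'
      + ((a * u p + c) * c * Dx (Dx (Dt (fun r : ℝ × ℝ => Real.log (a * u r + c)))) p
          - c * a * Dx (Dx (Dt u)) p) * hc3e
      - (c * a * Dx (Dx (Dx v)) p) * hc3k
      + ((a * u p + c) * a * Dx (Dx (Dx v)) p) * hc3l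
  · -- second adjoint equation
    simp only [pt_eq_s7 hubd, px_eq_s7 hubd, pt_eq_s7 hvbd, px_eq_s7 hvbd, px_eq_s7 hDtub, px_eq_s7 hDxub,
      px_eq_s7 hDxDtub, px_eq_s7 hDxDxub, px_eq_s7 hDtvb, px_eq_s7 hDxvb, px_eq_s7 hDxDtvb, px_eq_s7 hDxDxvb,
      px_eq_s7 hud,
      add_zero, zero_mul, zero_add, mul_zero, sub_zero]
    rw [S1xx, X3, X1, Y1, S1]
    beta_reduce
    have hDxLp : Dx (fun r : ℝ × ℝ => Real.log (a * u r + c)) p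
        = a * Dx u p / (a * u p + c) := by
      rw [Dx_log (by fun_prop) (hAne p)]
      have : Dx (fun r : ℝ × ℝ => a * u r + c) p = a * Dx u p := by
        simp (disch := fun_prop) only
          [Dx_add, Dx_mul, Dx_const, add_zero, zero_add, mul_zero, zero_mul]
      rw [this]
    rw [hDxLp]
    have hA0 : a * u p + c ≠ 0 := hAne p
    field_simp
    linear_combination ((c1 * p.1 + c2) * a) * E1 p
      + (c3 * a) * E2 p
      + (a * Dx (Dx u) p + a * Dx (Dx (Dt u)) p * p.1) * hc1s
      - (a * Dx (Dx (Dt u)) p * p.1) * hc1e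
      - (a * Dx (Dx (Dt u)) p) * hc2'
      + (c * Dx (Dx (Dx (fun r : ℝ × ℝ => Real.log (a * u r + c)))) p) * hc3k
      - (a * Dx (Dx (Dx u)) p) * hc3l
end

section
/- Let u, v : ℝ × ℝ → ℝ be smooth (C^∞) functions of (t, x), let a, b, c, ε, κ, λ, σ be real constants with a = b, and suppose a·u(t,x) + c > 0 for all (t, x). Let c1, c2, c3 be real constants such that: if ε, κ, λ are not all zero then c1 = 0; and if κ ≠ 0 then c2 = 0. Define ū(t,x) = (a·u(t,x) + c)·(c1·ln(a·u(t,x) + c) + c2) and v̄(t,x) = c1·a·v(t,x) + c3. If (u, v) solves the BBM-KdV system, then (ū, v̄) solves the adjoint system at every point (t, x). -/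
open Real

lemma sliceT_diff {f : ℝ × ℝ → ℝ} (hf : ContDiff ℝ (⊤ : ℕ∞) f) (x : ℝ) :
    Differentiable ℝ (fun s => f (s, x)) :=
  (hf.differentiable (by simp)).comp (differentiable_id.prodMk (differentiable_const x))

lemma sliceX_diff {f : ℝ × ℝ → ℝ} (hf : ContDiff ℝ (⊤ : ℕ∞) f) (t : ℝ) :
    Differentiable ℝ (fun s => f (t, s)) :=
  (hf.differentiable (by simp)).comp ((differentiable_const t).prodMk differentiable_id)

lemma pt_eq_fderiv {f : ℝ × ℝ → ℝ} (hf : ContDiff ℝ (⊤ : ℕ∞) f) :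
    pt f = fun p => fderiv ℝ f p (1, 0) := by
  funext p
  have h1 : HasDerivAt (fun s : ℝ => (s, p.2)) ((1 : ℝ), (0 : ℝ)) p.1 :=
    (hasDerivAt_id p.1).prodMk (hasDerivAt_const p.1 p.2)
  have := ((hf.differentiable (by simp) p).hasFDerivAt).comp_hasDerivAt p.1 h1
  simpa [pt, Function.comp_def] using this.deriv

lemma px_eq_fderiv {f : ℝ × ℝ → ℝ} (hf : ContDiff ℝ (⊤ : ℕ∞) f) :
    px f = fun p => fderiv ℝ f p (0, 1) := by
  funext p
  have h1 : HasDerivAt (fun s : ℝ => (p.1, s)) ((0 : ℝ), (1 : ℝ)) p.2 :=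
    (hasDerivAt_const p.2 p.1).prodMk (hasDerivAt_id p.2)
  have := ((hf.differentiable (by simp) p).hasFDerivAt).comp_hasDerivAt p.2 h1
  simpa [px, Function.comp_def] using this.deriv

lemma pt_smooth {f : ℝ × ℝ → ℝ} (hf : ContDiff ℝ (⊤ : ℕ∞) f) : ContDiff ℝ (⊤ : ℕ∞) (pt f) := by
  rw [pt_eq_fderiv hf]
  exact (hf.fderiv_right (by simp)).clm_apply contDiff_const

lemma px_smooth {f : ℝ × ℝ → ℝ} (hf : ContDiff ℝ (⊤ : ℕ∞) f) : ContDiff ℝ (⊤ : ℕ∞) (px f) := by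
  rw [px_eq_fderiv hf]
  exact (hf.fderiv_right (by simp)).clm_apply contDiff_const

lemma pt_lin {f : ℝ × ℝ → ℝ} (hf : ContDiff ℝ (⊤ : ℕ∞) f) (C D : ℝ) :
    pt (fun p => C * f p + D) = fun p => C * pt f p := by
  funext p
  simp only [pt]
  rw [deriv_add_const, deriv_const_mul _ ((sliceT_diff hf p.2) p.1)]

lemma px_lin {f : ℝ × ℝ → ℝ} (hf : ContDiff ℝ (⊤ : ℕ∞) f) (C D : ℝ) :
    px (fun p => C * f p + D) = fun p => C * px f p := by
  funext p
  simp only [px]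
  rw [deriv_add_const, deriv_const_mul _ ((sliceX_diff hf p.1) p.2)]

lemma pt_cm {f : ℝ × ℝ → ℝ} (hf : ContDiff ℝ (⊤ : ℕ∞) f) (C : ℝ) :
    pt (fun p => C * f p) = fun p => C * pt f p := by
  funext p
  simp only [pt]
  rw [deriv_const_mul _ ((sliceT_diff hf p.2) p.1)]

lemma px_cm {f : ℝ × ℝ → ℝ} (hf : ContDiff ℝ (⊤ : ℕ∞) f) (C : ℝ) :
    px (fun p => C * f p) = fun p => C * px f p := by
  funext p
  simp only [px]
  rw [deriv_const_mul _ ((sliceX_diff hf p.1) p.2)]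

lemma pt_const (d : ℝ) : pt (fun _ => d) = fun _ => 0 := by
  funext p; simp [pt]

lemma px_const (d : ℝ) : px (fun _ => d) = fun _ => 0 := by
  funext p; simp [px]

lemma hasDerivAt_phi (a c c1 c2 y : ℝ) (hy : a * y + c > 0) :
    HasDerivAt (fun y => (a * y + c) * (c1 * Real.log (a * y + c) + c2))
      (a * (c1 * Real.log (a * y + c) + c2 + c1)) y := by
  have h1 : HasDerivAt (fun y : ℝ => a * y + c) a y := by
    simpa using ((hasDerivAt_id y).const_mul a).add_const c
  have h2 : HasDerivAt (fun y : ℝ => Real.log (a * y + c)) ((a * y + c)⁻¹ * a) y :=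
    by have := (Real.hasDerivAt_log hy.ne').comp y h1; exact this
  have h3 : HasDerivAt (fun y : ℝ => c1 * Real.log (a * y + c) + c2)
      (c1 * ((a * y + c)⁻¹ * a)) y := (h2.const_mul c1).add_const c2
  have : HasDerivAt (fun y => (a * y + c) * (c1 * Real.log (a * y + c) + c2)) _ y := h1.mul h3
  convert this using 1
  have hk := mul_inv_cancel₀ hy.ne'
  linear_combination (-(c1 * a)) * hk

lemma pt_comp_phi {u : ℝ × ℝ → ℝ} (hu : ContDiff ℝ (⊤ : ℕ∞) u) (a c c1 c2 : ℝ)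
    (hpos : ∀ p : ℝ × ℝ, a * u p + c > 0) (p : ℝ × ℝ) :
    pt (fun p => (a * u p + c) * (c1 * Real.log (a * u p + c) + c2)) p
      = a * (c1 * Real.log (a * u p + c) + c2 + c1) * pt u p := by
  have hs := ((sliceT_diff hu p.2) p.1).hasDerivAt
  have h := (hasDerivAt_phi a c c1 c2 (u (p.1, p.2)) (hpos (p.1, p.2))).comp p.1 hs
  simpa [pt, Function.comp_def] using h.deriv

lemma px_comp_phi {u : ℝ × ℝ → ℝ} (hu : ContDiff ℝ (⊤ : ℕ∞) u) (a c c1 c2 : ℝ)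
    (hpos : ∀ p : ℝ × ℝ, a * u p + c > 0) (p : ℝ × ℝ) :
    px (fun p => (a * u p + c) * (c1 * Real.log (a * u p + c) + c2)) p
      = a * (c1 * Real.log (a * u p + c) + c2 + c1) * px u p := by
  have hs := ((sliceX_diff hu p.1) p.2).hasDerivAt
  have h := (hasDerivAt_phi a c c1 c2 (u (p.1, p.2)) (hpos (p.1, p.2))).comp p.2 hs
  simpa [px, Function.comp_def] using h.deriv

theorem stmt_8 (u v : ℝ × ℝ → ℝ) (hu : ContDiff ℝ (⊤ : ℕ∞) u) (hv : ContDiff ℝ (⊤ : ℕ∞) v)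
    (a b c ε κ lam σ : ℝ)
    (hab : a = b) (hpos : ∀ p : ℝ × ℝ, a * u p + c > 0)
    (c1 c2 c3 : ℝ)
    (h1 : ¬(ε = 0 ∧ κ = 0 ∧ lam = 0) → c1 = 0)
    (h2 : κ ≠ 0 → c2 = 0)
    (hsol : BBMKdV a b c ε κ lam σ u v) :
    AdjBBMKdV a b c ε κ lam σ u v
      (fun p => (a * u p + c) * (c1 * Real.log (a * u p + c) + c2))
      (fun p => c1 * a * v p + c3) := by
  subst hab
  obtain ⟨hF1, hF2⟩ := hsol
  by_cases hall : ε = 0 ∧ κ = 0 ∧ lam = 0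
  · obtain ⟨hε, hκ, hlam⟩ := hall
    constructor
    · intro p
      have hF1p := hF1 p
      rw [hε, hκ] at hF1p
      rw [pt_comp_phi hu a c c1 c2 hpos p, px_comp_phi hu a c c1 c2 hpos p,
        px_lin hv (c1 * a) c3, hε, hlam]
      linear_combination (a * (c1 * Real.log (a * u p + c) + c2 + c1)) * hF1p
    · intro p
      have hF2p := hF2 p
      rw [hlam] at hF2p
      rw [px_comp_phi hu a c c1 c2 hpos p, pt_lin hv (c1 * a) c3,
        px_lin hv (c1 * a) c3, px_cm (pt_smooth hv) (c1 * a),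
        px_cm (px_smooth (pt_smooth hv)) (c1 * a), hκ]
      linear_combination (a * c1) * hF2p
  · have hc1 : c1 = 0 := h1 hall
    subst hc1
    have hvb : (fun p : ℝ × ℝ => (0 : ℝ) * a * v p + c3) = fun _ => c3 := by
      funext p; ring
    by_cases hκ : κ = 0
    · have hub : (fun p : ℝ × ℝ =>
          (a * u p + c) * ((0 : ℝ) * Real.log (a * u p + c) + c2))
          = fun p => (c2 * a) * u p + (c2 * c) := by
        funext p; ring
      rw [hub, hvb]
      constructor
      · intro p
        have hF1p := hF1 p
        rw [hκ] at hF1p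
        rw [pt_lin hu (c2 * a) (c2 * c), px_lin hu (c2 * a) (c2 * c),
          px_cm (pt_smooth hu) (c2 * a), px_cm (px_smooth (pt_smooth hu)) (c2 * a)]
        simp only [px_const]
        linear_combination (c2 * a) * hF1p
      · intro p
        rw [px_lin hu (c2 * a) (c2 * c), hκ]
        simp only [pt_const, px_const]
        ring
    · have hc2 : c2 = 0 := h2 hκ
      subst hc2
      have hub : (fun p : ℝ × ℝ =>
          (a * u p + c) * ((0 : ℝ) * Real.log (a * u p + c) + 0))
          = fun _ => (0 : ℝ) := by
        funext p; ring
      rw [hub, hvb]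
      constructor
      · intro p
        simp only [pt_const, px_const]
        ring
      · intro p
        simp only [pt_const, px_const]
        ring
end

section
/- Let u, v : ℝ × ℝ → ℝ be smooth (C^∞) functions of (t, x) and let a, b, c, ε, κ, λ, σ be real constants with b = 0, κ = 0 and a ≠ 0. If (u, v) solves the BBM-KdV system, then for every real number s the scaled pair ũ(t,x) = (exp(−2·a·s)·(a·u(exp(−a·s)·t, x) + c) − c)/a, ṽ(t,x) = exp(−a·s)·v(exp(−a·s)·t, x) also solves the BBM-KdV system. (This is the invariance under the one-parameter group generated by the symmetry X₁ = (a + b)·(t·∂_t − v·∂_v) − 2·(a·u + c)·∂_u.) -/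
open Real

lemma px_scale (f : ℝ × ℝ → ℝ) (k m e : ℝ) :
    px (fun p => k * f (e * p.1, p.2) + m) = fun p => k * px f (e * p.1, p.2) := by
  funext p
  show deriv (fun x => k * f (e * p.1, x) + m) p.2 = _
  rw [deriv_add_const, deriv_const_mul_field]
  rfl

lemma px_scale0 (f : ℝ × ℝ → ℝ) (k e : ℝ) :
    px (fun p => k * f (e * p.1, p.2)) = fun p => k * px f (e * p.1, p.2) := by
  have := px_scale f k 0 e
  simpa using this

lemma pt_scale (f : ℝ × ℝ → ℝ) (hf : Differentiable ℝ f) (k m e : ℝ) :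
    pt (fun p => k * f (e * p.1, p.2) + m) = fun p => (k * e) * pt f (e * p.1, p.2) := by
  funext p
  have hg : Differentiable ℝ (fun t : ℝ => f (t, p.2)) :=
    hf.comp (differentiable_id.prodMk (differentiable_const _))
  have h1 : HasDerivAt (fun t : ℝ => e * t) e p.1 := by
    simpa using (hasDerivAt_id p.1).const_mul e
  have h2 : HasDerivAt (fun t : ℝ => f (e * t, p.2))
      (deriv (fun t : ℝ => f (t, p.2)) (e * p.1) * e) p.1 :=
    ((hg (e * p.1)).hasDerivAt).comp p.1 h1
  show deriv (fun t => k * f (e * t, p.2) + m) p.1 = _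
  rw [deriv_add_const, deriv_const_mul_field, h2.deriv]
  show k * (pt f (e * p.1, p.2) * e) = _
  ring

lemma pt_scale0 (f : ℝ × ℝ → ℝ) (hf : Differentiable ℝ f) (k e : ℝ) :
    pt (fun p => k * f (e * p.1, p.2)) = fun p => (k * e) * pt f (e * p.1, p.2) := by
  have := pt_scale f hf k 0 e
  simpa using this

theorem stmt_14 (u v : ℝ × ℝ → ℝ) (hu : ContDiff ℝ (⊤ : ℕ∞) u) (hv : ContDiff ℝ (⊤ : ℕ∞) v)
    (a b c ε κ lam σ : ℝ)
    (hb : b = 0) (hk : κ = 0) (ha : a ≠ 0)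
    (hsol : BBMKdV a b c ε κ lam σ u v) :
    ∀ s : ℝ, BBMKdV a b c ε κ lam σ
      (fun p => (Real.exp (-2 * a * s) * (a * u (Real.exp (-a * s) * p.1, p.2) + c) - c) / a)
      (fun p => Real.exp (-a * s) * v (Real.exp (-a * s) * p.1, p.2)) := by
  intro s
  have hud : Differentiable ℝ u := hu.differentiable (by simp)
  have hvd : Differentiable ℝ v := hv.differentiable (by simp)
  set E := Real.exp (-a * s) with hEdef
  set E2 := Real.exp (-2 * a * s) with hE2def
  have hE2 : E2 = E * E := by
    rw [hE2def, hEdef, ← Real.exp_add]; ring_nf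
  have hueq : (fun p : ℝ × ℝ => (E2 * (a * u (E * p.1, p.2) + c) - c) / a)
      = fun p => E2 * u (E * p.1, p.2) + (E2 * c - c) / a := by
    funext p; field_simp; ring
  have hm : a * ((E2 * c - c) / a) = E2 * c - c := mul_div_cancel₀ _ ha
  rw [hueq]
  unfold BBMKdV
  constructor
  · intro p
    rw [pt_scale u hud E2 ((E2 * c - c) / a) E,
        px_scale0 (pt u) (E2 * E) E,
        px_scale0 (px (pt u)) (E2 * E) E,
        px_scale u E2 ((E2 * c - c) / a) E,
        px_scale0 v E E,
        px_scale0 (px v) E E,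
        px_scale0 (px (px v)) E E]
    have h1 := hsol.1 (E * p.1, p.2)
    rw [hb, hk] at h1 ⊢
    rw [hE2] at hm ⊢
    linear_combination (E ^ 3) * h1 + (E * px v (E * p.1, p.2)) * hm
  · intro p
    rw [pt_scale0 v hvd E E,
        px_scale0 (pt v) (E * E) E,
        px_scale0 (px (pt v)) (E * E) E,
        px_scale u E2 ((E2 * c - c) / a) E,
        px_scale0 (px u) E2 E,
        px_scale0 (px (px u)) E2 E,
        px_scale0 v E E]
    have h2 := hsol.2 (E * p.1, p.2)
    rw [hb] at h2 ⊢
    rw [hE2] at hm ⊢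
    linear_combination (E ^ 2) * h2
end
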